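/- Let n ≥ 3, ψ a permutation-symmetric state of n qudits, and X a matrix with X_{(1)}ψ ∈ S. Then for every polynomial f with complex coefficients, f(X)_{(1)}ψ ∈ S. -/

import Mathlib

open Matrix BigOperators Polynomial

/-- Permutation symmetry of an `n`-qudit state represented by its amplitudes. -/
def PSym {n d : ℕ} (ψ : (Fin n → Fin d) → ℂ) : Prop :=
  ∀ σ : Equiv.Perm (Fin n), ∀ x : Fin n → Fin d, ψ (x ∘ σ) = ψ x

/-- The operator `B` acting on the `k`-th tensor factor (identity elsewhere). -/
noncomputable def appAt {n d : ℕ} (k : Fin n) (B : Matrix (Fin d) (Fin d) ℂ)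
    (ψ : (Fin n → Fin d) → ℂ) : (Fin n → Fin d) → ℂ :=
  fun x => ∑ j : Fin d, B (x k) j * ψ (Function.update x k j)

/-- The operator `A 1 ⊗ A 2 ⊗ ⋯ ⊗ A n` acting on an `n`-qudit state. -/
noncomputable def appAll {n d : ℕ} (A : Fin n → Matrix (Fin d) (Fin d) ℂ)
    (ψ : (Fin n → Fin d) → ℂ) : (Fin n → Fin d) → ℂ :=
  fun x => ∑ y : Fin n → Fin d, (∏ k, A k (x k) (y k)) * ψ y

/-!
For a symmetric state `ψ`, the vector `X_(a) ψ` is `X_(1) ψ` with the factors `1` and `a`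
swapped; so if `X_(1) ψ` is symmetric, then `X_(a) ψ = X_(1) ψ` for every site `a`. Operators
on different sites commute, hence for `a ≠ b`
`X_(a) X_(1) ψ = X_(a) X_(b) ψ = X_(b) X_(a) ψ = X_(b) X_(1) ψ`,
and with a third site available any two sites are linked in this way: `X_(a) X_(1) ψ` does not
depend on `a`, which makes `X_(1)² ψ` symmetric. Iterating gives symmetry of `X_(1)^m ψ` for all
`m`, and the statement for `f(X)` follows by linearity.
-/

variable {n d : ℕ}

lemma PSym.add {v w : (Fin n → Fin d) → ℂ} (hv : PSym v) (hw : PSym w) : PSym (v + w) :=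
  fun σ x => by simp only [Pi.add_apply, hv σ x, hw σ x]

lemma PSym.smul {v : (Fin n → Fin d) → ℂ} (hv : PSym v) (c : ℂ) : PSym (c • v) :=
  fun σ x => by simp only [Pi.smul_apply, hv σ x]

lemma appAt_zero (k : Fin n) (v : (Fin n → Fin d) → ℂ) :
    appAt k (0 : Matrix (Fin d) (Fin d) ℂ) v = 0 := by
  funext x
  simp [appAt]

lemma appAt_add (k : Fin n) (B C : Matrix (Fin d) (Fin d) ℂ) (v : (Fin n → Fin d) → ℂ) :
    appAt k (B + C) v = appAt k B v + appAt k C v := by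
  funext x
  simp only [appAt, Pi.add_apply, Matrix.add_apply, add_mul, Finset.sum_add_distrib]

lemma appAt_smul (k : Fin n) (c : ℂ) (B : Matrix (Fin d) (Fin d) ℂ) (v : (Fin n → Fin d) → ℂ) :
    appAt k (c • B) v = c • appAt k B v := by
  funext x
  simp only [appAt, Pi.smul_apply, Matrix.smul_apply, smul_eq_mul, Finset.mul_sum, mul_assoc]

lemma appAt_one (k : Fin n) (v : (Fin n → Fin d) → ℂ) :
    appAt k (1 : Matrix (Fin d) (Fin d) ℂ) v = v := by
  funext x
  simp [appAt, Matrix.one_apply]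

lemma appAt_mul (k : Fin n) (B C : Matrix (Fin d) (Fin d) ℂ) (v : (Fin n → Fin d) → ℂ) :
    appAt k (B * C) v = appAt k B (appAt k C v) := by
  funext x
  simp only [appAt, Matrix.mul_apply, Function.update_self, Function.update_idem,
    Finset.sum_mul, Finset.mul_sum, mul_assoc]
  exact Finset.sum_comm

lemma appAt_pow_succ (k : Fin n) (B : Matrix (Fin d) (Fin d) ℂ) (m : ℕ)
    (v : (Fin n → Fin d) → ℂ) :
    appAt k (B ^ (m + 1)) v = appAt k B (appAt k (B ^ m) v) := by
  rw [pow_succ', appAt_mul]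

lemma appAt_comm {a b : Fin n} (hab : a ≠ b) (B C : Matrix (Fin d) (Fin d) ℂ)
    (v : (Fin n → Fin d) → ℂ) :
    appAt a B (appAt b C v) = appAt b C (appAt a B v) := by
  funext x
  simp only [appAt, Finset.mul_sum, Function.update_of_ne hab.symm, Function.update_of_ne hab,
    Function.update_comm hab, mul_left_comm (B _ _)]
  exact Finset.sum_comm

lemma PSym.appAt_comp_perm {v : (Fin n → Fin d) → ℂ} (hv : PSym v) (σ : Equiv.Perm (Fin n))
    (k : Fin n) (B : Matrix (Fin d) (Fin d) ℂ) (x : Fin n → Fin d) :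
    appAt k B v (x ∘ σ) = appAt (σ k) B v x := by
  refine Finset.sum_congr rfl fun j _ => ?_
  have hupdate := Function.update_comp_equiv x σ (σ k) j
  rw [Equiv.symm_apply_apply] at hupdate
  rw [Function.comp_apply, ← hupdate, hv]

lemma PSym.appAt_eq_of_psym {v : (Fin n → Fin d) → ℂ} (hv : PSym v) {k : Fin n}
    {B : Matrix (Fin d) (Fin d) ℂ} (hB : PSym (appAt k B v)) (a : Fin n) :
    appAt a B v = appAt k B v := by
  funext x
  rw [← hB (Equiv.swap k a) x, hv.appAt_comp_perm, Equiv.swap_apply_left]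

lemma PSym.psym_appAt_of_forall_eq {v : (Fin n → Fin d) → ℂ} (hv : PSym v) {k : Fin n}
    {B : Matrix (Fin d) (Fin d) ℂ} (h : ∀ a, appAt a B v = appAt k B v) :
    PSym (appAt k B v) := fun σ x => by
  rw [hv.appAt_comp_perm, h]

lemma PSym.psym_appAt_appAt (hn : 3 ≤ n) {v : (Fin n → Fin d) → ℂ} (hv : PSym v) {k : Fin n}
    {B : Matrix (Fin d) (Fin d) ℂ} (hB : PSym (appAt k B v)) :
    PSym (appAt k B (appAt k B v)) := by
  have hsite := hv.appAt_eq_of_psym hB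
  have hpair : ∀ a b, a ≠ b → appAt a B (appAt k B v) = appAt b B (appAt k B v) :=
    fun a b hab => calc
      appAt a B (appAt k B v) = appAt a B (appAt b B v) := by rw [hsite b]
      _ = appAt b B (appAt a B v) := appAt_comm hab B B v
      _ = appAt b B (appAt k B v) := by rw [hsite a]
  refine hB.psym_appAt_of_forall_eq fun a => ?_
  obtain ⟨c, hca, hck⟩ := Fin.exists_ne_and_ne_of_two_lt a k (by omega)
  rw [hpair a c hca.symm, hpair c k hck]

lemma PSym.psym_appAt_pow (hn : 3 ≤ n) {v : (Fin n → Fin d) → ℂ} (hv : PSym v) {k : Fin n}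
    {B : Matrix (Fin d) (Fin d) ℂ} (hB : PSym (appAt k B v)) (m : ℕ) :
    PSym (appAt k (B ^ m) v) := by
  suffices h : PSym (appAt k (B ^ m) v) ∧ PSym (appAt k (B ^ (m + 1)) v) from h.1
  induction m with
  | zero => simpa [appAt_one] using And.intro hv hB
  | succ m ih =>
    refine ⟨ih.2, ?_⟩
    simp only [appAt_pow_succ] at ih ⊢
    exact ih.1.psym_appAt_appAt hn ih.2

def psymLocus (k : Fin n) (v : (Fin n → Fin d) → ℂ) : Submodule ℂ (Matrix (Fin d) (Fin d) ℂ) where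
  carrier := {B | PSym (appAt k B v)}
  zero_mem' := by
    intro σ x
    simp [appAt_zero]
  add_mem' {B C} hB hC := by
    change PSym (appAt k (B + C) v)
    rw [appAt_add]
    exact hB.add hC
  smul_mem' c B hB := by
    change PSym (appAt k (c • B) v)
    rw [appAt_smul]
    exact hB.smul c

theorem stmt_5 {n d : ℕ} (hn : 3 ≤ n) (ψ : (Fin n → Fin d) → ℂ) (hψ : PSym ψ)
    (X : Matrix (Fin d) (Fin d) ℂ)
    (hX : PSym (appAt ⟨0, by omega⟩ X ψ))
    (f : Polynomial ℂ) :
    PSym (appAt ⟨0, by omega⟩ (Polynomial.aeval X f) ψ) := by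
  change Polynomial.aeval X f ∈ psymLocus _ ψ
  rw [Polynomial.aeval_eq_sum_range]
  exact Submodule.sum_mem _ fun i _ =>
    Submodule.smul_mem _ _ (hψ.psym_appAt_pow hn hX i)
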